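/- arXiv:1410.5919 — 3 statements merged into one kernel-verified Lean document; each statement's English description precedes it below -/
import Mathlib

section
/- (Differential privacy implies adversarial privacy.) Let ι be a finite type, S ⊆ ι a set of states, ε ≥ 0 a real number, p : ι → ℝ a prior probability vector (p i ≥ 0 for all i, ∑ᵢ p i = 1) whose support is contained in S (p i = 0 for i ∉ S), and q : ι → ℝ a likelihood function with q i > 0 for all i ∈ S. If q i ≤ exp(ε) · q j for all i, j ∈ S (the differential privacy condition on the mechanism's output probabilities), then for every i ∈ ι the Bayesian posterior is bounded by exp(ε) times the prior: p i · q i / (∑ⱼ p j · q j) ≤ exp(ε) · p i. -/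
open Real

/-! The evidence `∑ j, p j * q j` is a `p`-average of likelihoods, each of which is at least
`exp (-ε) * q i` by differential privacy; hence `q i ≤ exp ε * ∑ j, p j * q j`, which is the
posterior bound after multiplying by `p i` and dividing by the evidence. -/

lemma le_mul_sum_mul_of_forall_le_mul {ι : Type*} [Fintype ι] {S : Set ι} {p q : ι → ℝ}
    {x c : ℝ} (hp_nonneg : ∀ j, 0 ≤ p j) (hp_sum : ∑ j, p j = 1)
    (hp_supp : ∀ j ∉ S, p j = 0) (h : ∀ j ∈ S, x ≤ c * q j) :
    x ≤ c * ∑ j, p j * q j := by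
  calc x = ∑ j, p j * x := by rw [← Finset.sum_mul, hp_sum, one_mul]
    _ ≤ ∑ j, c * (p j * q j) := by
      refine Finset.sum_le_sum fun j _ => ?_
      by_cases hj : j ∈ S
      · nlinarith [h j hj, hp_nonneg j]
      · simp [hp_supp j hj]
    _ = c * ∑ j, p j * q j := (Finset.mul_sum _ _ _).symm

lemma mul_div_le_mul_of_le_mul {a b c d : ℝ} (ha : 0 ≤ a) (hc : 0 ≤ c) (hd : 0 ≤ d)
    (h : b ≤ c * d) : a * b / d ≤ c * a := by
  rcases hd.eq_or_lt with rfl | hd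
  · simpa using mul_nonneg hc ha
  · rw [div_le_iff₀ hd]
    nlinarith

theorem dp_implies_adversarial_privacy_general {ι : Type*} [Fintype ι]
    (S : Set ι) (ε : ℝ)
    (p : ι → ℝ) (hp_nonneg : ∀ i, 0 ≤ p i) (hp_sum : ∑ i, p i = 1)
    (hp_supp : ∀ i ∉ S, p i = 0)
    (q : ι → ℝ) (hq_pos : ∀ i ∈ S, 0 < q i)
    (hdp : ∀ i ∈ S, ∀ j ∈ S, q i ≤ exp ε * q j) :
    ∀ i : ι, p i * q i / (∑ j, p j * q j) ≤ exp ε * p i := by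
  intro i
  by_cases hi : i ∈ S
  · have hevidence_nonneg : 0 ≤ ∑ j, p j * q j := by
      refine Finset.sum_nonneg fun j _ => ?_
      by_cases hj : j ∈ S
      · exact mul_nonneg (hp_nonneg j) (hq_pos j hj).le
      · simp [hp_supp j hj]
    exact mul_div_le_mul_of_le_mul (hp_nonneg i) (exp_pos ε).le hevidence_nonneg
      (le_mul_sum_mul_of_forall_le_mul hp_nonneg hp_sum hp_supp (hdp i hi))
  · simp [hp_supp i hi]

/-- Differential privacy implies adversarial privacy: if the likelihoods `q` satisfy the
`ε`-differential-privacy ratio bound on the support set `S` and the prior `p` is supported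
on `S`, then the Bayesian posterior is at most `exp ε` times the prior. -/
theorem dp_implies_adversarial_privacy {ι : Type*} [Fintype ι]
    (S : Set ι) (ε : ℝ) (hε : 0 ≤ ε)
    (p : ι → ℝ) (hp_nonneg : ∀ i, 0 ≤ p i) (hp_sum : ∑ i, p i = 1)
    (hp_supp : ∀ i ∉ S, p i = 0)
    (q : ι → ℝ) (hq_pos : ∀ i ∈ S, 0 < q i)
    (hdp : ∀ i ∈ S, ∀ j ∈ S, q i ≤ exp ε * q j) :
    ∀ i : ι, p i * q i / (∑ j, p j * q j) ≤ exp ε * p i :=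
  dp_implies_adversarial_privacy_general S ε p hp_nonneg hp_sum hp_supp q hq_pos hdp
end

section
/- (Second moment integral of the two-dimensional K-norm mechanism.) Let K ⊆ ℝ² be a compact convex set with 0 in its interior, let ‖·‖_K denote the Minkowski functional (gauge) of K, let ‖·‖₂ denote the Euclidean norm, and let ε > 0. Then ∫_{ℝ²} ‖z‖₂² · exp(−ε ‖z‖_K) dz = (24/ε⁴) · ∫_K ‖x‖₂² dx, where both integrals are with respect to two-dimensional Lebesgue measure. -/
/-!
Write `exp (-c t) = ∫_{s ≥ t} c e^{-cs} ds` and exchange the order of integration (Tonelli):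
the integral becomes `∫_{s > 0} (∫_{gauge K ≤ s} ‖z‖^p dz) c e^{-cs} ds`. For `s > 0` the sublevel
set `{gauge K ≤ s}` is `s • K`, over which `‖z‖^p` integrates to `s^(n+p) ∫_K ‖x‖^p` by
homogeneity (`n` the dimension), and what remains is the Gamma integral
`c ∫_{s > 0} s^(n+p) e^{-cs} ds = (n+p)! / c^(n+p)`, which is `24 / c^4` for `n = p = 2`.
-/

open Real MeasureTheory Set Topology Module
open scoped ENNReal Pointwise Nat

theorem ofReal_exp_neg_mul_eq_lintegral_Ici {c : ℝ} (hc : 0 < c) (t : ℝ) :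
    ENNReal.ofReal (exp (-(c * t))) = ∫⁻ s in Ici t, ENNReal.ofReal (c * exp (-(c * s))) := by
  have hint : IntegrableOn (fun s => c * exp (-(c * s))) (Ioi t) := by
    have h := (exp_neg_integrableOn_Ioi t hc).const_mul c
    simp only [neg_mul] at h
    exact h
  rw [← setLIntegral_congr Ioi_ae_eq_Ici, ← ofReal_integral_eq_lintegral_ofReal hint
    (ae_of_all _ fun s => by positivity), integral_const_mul]
  have h := integral_exp_mul_Ioi (neg_lt_zero.2 hc) t
  simp only [neg_mul] at h
  rw [h]
  field_simp

theorem lintegral_mul_ofReal_exp_neg_eq_lintegral_setOf_le {α : Type*} [MeasurableSpace α]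
    (μ : Measure α) [SFinite μ] {f : α → ℝ≥0∞} {g : α → ℝ} (hf : Measurable f)
    (hg : Measurable g) {c : ℝ} (hc : 0 < c) :
    ∫⁻ x, f x * ENNReal.ofReal (exp (-(c * g x))) ∂μ =
      ∫⁻ s, (∫⁻ x in {x | g x ≤ s}, f x ∂μ) * ENNReal.ofReal (c * exp (-(c * s))) := by
  set F : α × ℝ → ℝ≥0∞ :=
    {p | g p.1 ≤ p.2}.indicator fun p => f p.1 * ENNReal.ofReal (c * exp (-(c * p.2)))
  have hF : Measurable F := (by fun_prop : Measurable _).indicator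
    (measurableSet_le (hg.comp measurable_fst) measurable_snd)
  calc ∫⁻ x, f x * ENNReal.ofReal (exp (-(c * g x))) ∂μ = ∫⁻ x, (∫⁻ s, F (x, s)) ∂μ := by
        refine lintegral_congr fun x => ?_
        rw [ofReal_exp_neg_mul_eq_lintegral_Ici hc, ← lintegral_const_mul _ (by fun_prop),
          ← lintegral_indicator measurableSet_Ici]
        rfl
    _ = ∫⁻ s, ∫⁻ x, F (x, s) ∂μ :=
        lintegral_lintegral_swap (f := fun x s => F (x, s)) hF.aemeasurable
    _ = _ := by
        refine lintegral_congr fun s => ?_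
        rw [← lintegral_mul_const _ hf,
          ← lintegral_indicator (measurableSet_le hg measurable_const)]
        rfl

theorem lintegral_mul_ofReal_exp_neg_eq_lintegral_setOf_le_of_nonneg {α : Type*}
    [MeasurableSpace α] (μ : Measure α) [SFinite μ] {f : α → ℝ≥0∞} {g : α → ℝ} (hf : Measurable f)
    (hg : Measurable g) (hg0 : ∀ x, 0 ≤ g x) {c : ℝ} (hc : 0 < c) :
    ∫⁻ x, f x * ENNReal.ofReal (exp (-(c * g x))) ∂μ =
      ∫⁻ s in Ioi 0, (∫⁻ x in {x | g x ≤ s}, f x ∂μ) * ENNReal.ofReal (c * exp (-(c * s))) := by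
  rw [lintegral_mul_ofReal_exp_neg_eq_lintegral_setOf_le μ hf hg hc,
    setLIntegral_congr Ioi_ae_eq_Ici, setLIntegral_eq_of_support_subset]
  refine Function.support_subset_iff'.2 fun s hs => ?_
  have hempty : {x | g x ≤ s} = ∅ :=
    eq_empty_of_forall_notMem fun x hx => hs ((hg0 x).trans hx)
  simp [hempty]

theorem integral_pow_mul_exp_neg_mul_Ioi (k : ℕ) {c : ℝ} (hc : 0 < c) :
    ∫ s in Ioi 0, s ^ k * exp (-(c * s)) = k ! / c ^ (k + 1) := by
  have h := integral_rpow_mul_exp_neg_mul_Ioi (a := k + 1) (by positivity) hc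
  rw [add_sub_cancel_right, Gamma_nat_eq_factorial, ← Nat.cast_succ] at h
  simp only [rpow_natCast] at h
  rw [h, one_div, inv_pow]
  field_simp

section NormedSpace

variable {E : Type*} [NormedAddCommGroup E] [NormedSpace ℝ E]

theorem setOf_gauge_le_eq_smul {K : Set E} (hconv : Convex ℝ K) (hclosed : IsClosed K)
    (hK0 : K ∈ 𝓝 0) {s : ℝ} (hs : 0 < s) : {z | gauge K z ≤ s} = s • K := by
  ext z
  have h := gauge_le_one_iff_mem_closure hconv hK0 (x := s⁻¹ • z)
  rw [hclosed.closure_eq, gauge_smul_of_nonneg (inv_nonneg.2 hs.le), smul_eq_mul,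
    inv_mul_le_iff₀ hs, mul_one] at h
  rw [mem_ofPred_eq, mem_smul_set_iff_inv_smul_mem₀ hs.ne', h]

variable [FiniteDimensional ℝ E] [MeasurableSpace E] [BorelSpace E] (μ : Measure E)
  [μ.IsAddHaarMeasure]

theorem setIntegral_smul_set_norm_pow (K : Set E) (p : ℕ) {s : ℝ} (hs : 0 < s) :
    ∫ z in s • K, ‖z‖ ^ p ∂μ = s ^ (finrank ℝ E + p) * ∫ x in K, ‖x‖ ^ p ∂μ := by
  have h := Measure.setIntegral_comp_smul_of_pos μ (fun z => ‖z‖ ^ p) K hs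
  simp only [norm_smul, mul_pow, Real.norm_of_nonneg hs.le, integral_const_mul,
    smul_eq_mul] at h
  rw [pow_add, mul_assoc, h]
  field_simp

theorem lintegral_setOf_gauge_le_norm_pow {K : Set E} (hKcomp : IsCompact K)
    (hKconv : Convex ℝ K) (hK0 : K ∈ 𝓝 0) (p : ℕ) {s : ℝ} (hs : 0 < s) :
    ∫⁻ z in {z | gauge K z ≤ s}, ENNReal.ofReal (‖z‖ ^ p) ∂μ =
      ENNReal.ofReal (s ^ (finrank ℝ E + p) * ∫ x in K, ‖x‖ ^ p ∂μ) := by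
  rw [setOf_gauge_le_eq_smul hKconv hKcomp.isClosed hK0 hs,
    ← setIntegral_smul_set_norm_pow μ K p hs, ofReal_integral_eq_lintegral_ofReal
      ((by fun_prop : Continuous fun z : E => ‖z‖ ^ p).continuousOn.integrableOn_compact
        (hKcomp.smul s))
      (ae_of_all _ fun _ => by positivity)]

theorem integral_norm_pow_mul_exp_neg_gauge {K : Set E} (hKcomp : IsCompact K)
    (hKconv : Convex ℝ K) (hK0 : K ∈ 𝓝 0) (p : ℕ) {c : ℝ} (hc : 0 < c) :
    ∫ z, ‖z‖ ^ p * exp (-c * gauge K z) ∂μ =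
      (finrank ℝ E + p)! / c ^ (finrank ℝ E + p) * ∫ x in K, ‖x‖ ^ p ∂μ := by
  set n := finrank ℝ E + p
  set C := ∫ x in K, ‖x‖ ^ p ∂μ
  have hC : 0 ≤ C := setIntegral_nonneg hKcomp.measurableSet fun x _ => by positivity
  have hgauge : Continuous (gauge K) := continuous_gauge hKconv hK0
  have hgamma : ∫ s in Ioi 0, s ^ n * exp (-(c * s)) = n ! / c ^ (n + 1) :=
    integral_pow_mul_exp_neg_mul_Ioi n hc
  have hlayer : ∫⁻ z, ENNReal.ofReal (‖z‖ ^ p * exp (-c * gauge K z)) ∂μ =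
      ENNReal.ofReal (n ! / c ^ n * C) := by
    calc _ = ∫⁻ z, ENNReal.ofReal (‖z‖ ^ p) * ENNReal.ofReal (exp (-(c * gauge K z))) ∂μ := by
          refine lintegral_congr fun z => ?_
          rw [neg_mul, ENNReal.ofReal_mul (by positivity)]
      _ = ∫⁻ s in Ioi 0, ENNReal.ofReal (c * C * (s ^ n * exp (-(c * s)))) := by
          rw [lintegral_mul_ofReal_exp_neg_eq_lintegral_setOf_le_of_nonneg μ (by fun_prop)
            hgauge.measurable gauge_nonneg hc]
          refine setLIntegral_congr_fun measurableSet_Ioi fun s (hs : 0 < s) => ?_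
          rw [lintegral_setOf_gauge_le_norm_pow μ hKcomp hKconv hK0 p hs,
            ← ENNReal.ofReal_mul (by positivity)]
          congr 1
          ring
      _ = ENNReal.ofReal (c * C * (n ! / c ^ (n + 1))) := by
          have hint : IntegrableOn (fun s => s ^ n * exp (-(c * s))) (Ioi 0) :=
            Integrable.of_integral_ne_zero (by rw [hgamma]; positivity)
          rw [← ofReal_integral_eq_lintegral_ofReal (hint.const_mul _)
            (ae_restrict_of_forall_mem measurableSet_Ioi fun s (hs : 0 < s) => by positivity),
            integral_const_mul, hgamma]
      _ = ENNReal.ofReal (n ! / c ^ n * C) := by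
          congr 1
          field_simp
          ring
  rw [integral_eq_lintegral_of_nonneg_ae (ae_of_all _ fun _ => by positivity)
    (by fun_prop), hlayer, ENNReal.toReal_ofReal (by positivity)]

end NormedSpace

/-- Second moment integral of the two-dimensional K-norm mechanism:
`∫ ‖z‖₂² exp (-ε ‖z‖_K) dz = (24/ε⁴) ∫_K ‖x‖₂² dx`. -/
theorem knorm_mechanism_second_moment (K : Set (EuclideanSpace ℝ (Fin 2)))
    (hKcomp : IsCompact K) (hKconv : Convex ℝ K) (h0 : (0 : EuclideanSpace ℝ (Fin 2)) ∈ interior K)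
    (ε : ℝ) (hε : 0 < ε) :
    (∫ z : EuclideanSpace ℝ (Fin 2), ‖z‖ ^ 2 * exp (-ε * gauge K z)) =
      24 / ε ^ 4 * ∫ x in K, ‖x‖ ^ 2 := by
  rw [integral_norm_pow_mul_exp_neg_gauge volume hKcomp hKconv
    (mem_interior_iff_mem_nhds.1 h0) 2 hε, finrank_euclideanSpace_fin]
  norm_num [Nat.factorial]
end

section
/- (Expected squared error of the two-dimensional K-norm mechanism.) Let K ⊆ ℝ² be a compact convex set with 0 in its interior and positive Lebesgue measure, let ‖·‖_K denote the Minkowski functional (gauge) of K, and let ε > 0. For the probability density p(z) = (ε²/(2 · vol(K))) · exp(−ε ‖z‖_K) on ℝ², the expected squared Euclidean norm satisfies ∫_{ℝ²} ‖z‖₂² · p(z) dz = (12/(ε² · vol(K))) · ∫_K ‖x‖₂² dx, i.e. 12/ε² times the mean squared Euclidean norm of a uniform point in K. -/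
/-!
Writing `exp (-ε ‖z‖_K) = ∫_{‖z‖_K}^∞ ε e^{-εt} dt` and swapping the two integrals turns the
left-hand side into `∫_0^∞ ε e^{-εt} ∫_{‖z‖_K < t} ‖z‖² dz dt`. The sublevel set `{‖·‖_K < t}` is
`t • interior K`, so by homogeneity the inner integral is `t ^ (d + 2) ∫_K ‖x‖² dx` (the boundary
of a convex set is null), and `∫_0^∞ ε e^{-εt} t ^ (d + 2) dt = (d + 2)! / ε ^ (d + 2)`. In the
plane this is `24 / ε⁴`, and the normalising constant `ε² / (2 vol K)` turns it into `12 / ε²`.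
-/

open Real MeasureTheory
open Set Pointwise Module Topology Nat
open scoped ENNReal

lemma lintegral_Ioi_mul_exp_neg_mul {ε : ℝ} (hε : 0 < ε) (s : ℝ) :
    ∫⁻ t in Ioi s, ENNReal.ofReal (ε * exp (-ε * t)) = ENNReal.ofReal (exp (-ε * s)) := by
  rw [← ofReal_integral_eq_lintegral_ofReal ((exp_neg_integrableOn_Ioi s hε).const_mul ε)
    (ae_of_all _ fun t => by positivity), integral_const_mul,
    integral_exp_mul_Ioi (neg_neg_of_pos hε), neg_div_neg_eq, mul_div_cancel₀ _ hε.ne']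

lemma integral_Ioi_mul_exp_neg_mul_mul_pow {ε : ℝ} (hε : 0 < ε) (m : ℕ) :
    ∫ t in Ioi 0, ε * exp (-ε * t) * t ^ m = m ! / ε ^ m := by
  have hGamma := integral_rpow_mul_exp_neg_mul_Ioi (a := m + 1) (by positivity) hε
  rw [add_sub_cancel_right, Gamma_nat_eq_factorial, ← Nat.cast_succ, rpow_natCast] at hGamma
  simp_rw [rpow_natCast] at hGamma
  calc ∫ t in Ioi 0, ε * exp (-ε * t) * t ^ m
      = ε * ∫ t in Ioi 0, t ^ m * exp (-(ε * t)) := by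
        rw [← integral_const_mul]; congr with t; ring_nf
    _ = m ! / ε ^ m := by rw [hGamma, one_div, inv_pow, pow_succ]; field_simp

lemma lintegral_Ioi_mul_exp_neg_mul_mul_pow {ε : ℝ} (hε : 0 < ε) (m : ℕ) :
    ∫⁻ t in Ioi 0, ENNReal.ofReal (ε * exp (-ε * t)) * ENNReal.ofReal (t ^ m) =
      ENNReal.ofReal (m ! / ε ^ m) := by
  have hnonneg : 0 ≤ᵐ[volume.restrict (Ioi 0)] fun t => ε * exp (-ε * t) * t ^ m := by
    filter_upwards [ae_restrict_mem measurableSet_Ioi] with t (ht : 0 < t)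
    positivity
  have h := integral_eq_lintegral_of_nonneg_ae hnonneg (by fun_prop)
  rw [integral_Ioi_mul_exp_neg_mul_mul_pow hε] at h
  have hfin : ∫⁻ t in Ioi 0, ENNReal.ofReal (ε * exp (-ε * t) * t ^ m) ≠ ∞ :=
    (ENNReal.toReal_pos_iff.1 (h ▸ by positivity)).2.ne
  rw [h, ENNReal.ofReal_toReal hfin]
  exact setLIntegral_congr_fun measurableSet_Ioi fun t _ =>
    (ENNReal.ofReal_mul (by positivity)).symm

lemma lintegral_mul_exp_neg_mul_eq_lintegral_setLIntegral_lt {α : Type*} [MeasurableSpace α]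
    (ν : Measure α) [SFinite ν] {g : α → ℝ} (hg : Measurable g) (hg0 : ∀ x, 0 ≤ g x)
    {w : α → ℝ≥0∞} (hw : Measurable w) {ε : ℝ} (hε : 0 < ε) :
    ∫⁻ x, w x * ENNReal.ofReal (exp (-ε * g x)) ∂ν =
      ∫⁻ t in Ioi 0, ENNReal.ofReal (ε * exp (-ε * t)) * ∫⁻ x in {x | g x < t}, w x ∂ν := by
  let ρ : ℝ → ℝ≥0∞ := fun t => ENNReal.ofReal (ε * exp (-ε * t))
  let F : α → ℝ → ℝ≥0∞ := fun x t =>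
    {p : α × ℝ | g p.1 < p.2}.indicator (fun p => w p.1 * ρ p.2) (x, t)
  have hF : Measurable (Function.uncurry F) :=
    (by fun_prop : Measurable fun p : α × ℝ => w p.1 * ρ p.2).indicator
      (measurableSet_lt (hg.comp measurable_fst) measurable_snd)
  have lintegral_in_t (x : α) : ∫⁻ t in Ioi 0, F x t = w x * ENNReal.ofReal (exp (-ε * g x)) :=
    calc ∫⁻ t in Ioi 0, F x t = ∫⁻ t in Ioi 0, (Ioi (g x)).indicator (fun t => w x * ρ t) t := rfl
      _ = ∫⁻ t in Ioi (g x), w x * ρ t := by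
        rw [lintegral_indicator measurableSet_Ioi, Measure.restrict_restrict measurableSet_Ioi,
          Ioi_inter_Ioi, sup_eq_left.2 (hg0 x)]
      _ = _ := by rw [lintegral_const_mul _ (by fun_prop), lintegral_Ioi_mul_exp_neg_mul hε]
  have lintegral_in_x (t : ℝ) : ∫⁻ x, F x t ∂ν = ρ t * ∫⁻ x in {x | g x < t}, w x ∂ν :=
    calc ∫⁻ x, F x t ∂ν = ∫⁻ x, {x | g x < t}.indicator (fun x => w x * ρ t) x ∂ν := rfl
      _ = _ := by
        rw [lintegral_indicator (measurableSet_lt hg measurable_const), lintegral_mul_const _ hw,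
          mul_comm]
  calc ∫⁻ x, w x * ENNReal.ofReal (exp (-ε * g x)) ∂ν = ∫⁻ x, (∫⁻ t in Ioi 0, F x t) ∂ν := by
        simp_rw [lintegral_in_t]
    _ = ∫⁻ t in Ioi 0, ∫⁻ x, F x t ∂ν := lintegral_lintegral_swap hF.aemeasurable
    _ = _ := by simp_rw [lintegral_in_x]; rfl

section NormedSpace

variable {E : Type*} [NormedAddCommGroup E] [NormedSpace ℝ E]

lemma setOfPred_gauge_lt_eq_smul_interior {K : Set E} (hK : Convex ℝ K) (h0 : K ∈ 𝓝 0) {t : ℝ}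
    (ht : 0 < t) : {z | gauge K z < t} = t • interior K := by
  ext z
  rw [mem_smul_set_iff_inv_smul_mem₀ ht.ne', ← gauge_lt_one_iff_mem_interior hK h0,
    gauge_smul_of_nonneg (inv_nonneg.2 ht.le), smul_eq_mul, inv_mul_lt_iff₀ ht, mul_one,
    mem_ofPred_eq]

variable [FiniteDimensional ℝ E] [MeasurableSpace E] [BorelSpace E]
  (μ : Measure E) [μ.IsAddHaarMeasure]

lemma setLIntegral_smul_set {t : ℝ} (ht : t ≠ 0) (f : E → ℝ≥0∞) (s : Set E) :
    ∫⁻ z in t • s, f z ∂μ = ENNReal.ofReal |t ^ finrank ℝ E| * ∫⁻ x in s, f (t • x) ∂μ := by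
  let e : E ≃ᵐ E := MeasurableEquiv.smul₀ t ht
  have hμ : μ = ENNReal.ofReal |t ^ finrank ℝ E| • μ.map e := by
    change μ = _ • μ.map (t • ·)
    rw [Measure.map_addHaar_smul μ ht, smul_smul, ← ENNReal.ofReal_mul (abs_nonneg _), ← abs_mul,
      mul_inv_cancel₀ (pow_ne_zero _ ht), abs_one, ENNReal.ofReal_one, one_smul]
  have hs : e ⁻¹' (t • s) = s := by ext x; exact smul_mem_smul_set_iff₀ ht s x
  conv_lhs => rw [hμ]
  rw [Measure.restrict_smul, lintegral_smul_measure, e.restrict_map, hs, lintegral_map_equiv]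
  rfl

lemma setLIntegral_smul_set_norm_pow {t : ℝ} (ht : 0 < t) (n : ℕ) (s : Set E) :
    ∫⁻ z in t • s, ENNReal.ofReal (‖z‖ ^ n) ∂μ =
      ENNReal.ofReal (t ^ (finrank ℝ E + n)) * ∫⁻ x in s, ENNReal.ofReal (‖x‖ ^ n) ∂μ := by
  simp_rw [setLIntegral_smul_set μ ht.ne', norm_smul, mul_pow, norm_of_nonneg ht.le,
    ENNReal.ofReal_mul (pow_nonneg ht.le n)]
  rw [lintegral_const_mul' _ _ ENNReal.ofReal_ne_top, ← mul_assoc,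
    ← ENNReal.ofReal_mul (abs_nonneg _), abs_of_pos (pow_pos ht _), pow_add]

theorem lintegral_norm_pow_mul_exp_neg_mul_gauge {K : Set E} (hK : Convex ℝ K) (h0 : K ∈ 𝓝 0)
    {ε : ℝ} (hε : 0 < ε) (n : ℕ) :
    ∫⁻ z, ENNReal.ofReal (‖z‖ ^ n) * ENNReal.ofReal (exp (-ε * gauge K z)) ∂μ =
      ENNReal.ofReal ((finrank ℝ E + n)! / ε ^ (finrank ℝ E + n)) *
        ∫⁻ x in K, ENNReal.ofReal (‖x‖ ^ n) ∂μ := by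
  rw [lintegral_mul_exp_neg_mul_eq_lintegral_setLIntegral_lt μ
    (continuous_gauge hK h0).measurable (fun z => gauge_nonneg z) (by fun_prop) hε]
  calc _ = ∫⁻ t in Ioi 0, ENNReal.ofReal (ε * exp (-ε * t)) *
        ENNReal.ofReal (t ^ (finrank ℝ E + n)) *
          ∫⁻ x in interior K, ENNReal.ofReal (‖x‖ ^ n) ∂μ := by
        refine setLIntegral_congr_fun measurableSet_Ioi fun t ht => ?_
        rw [setOfPred_gauge_lt_eq_smul_interior hK h0 ht, setLIntegral_smul_set_norm_pow μ ht,
          mul_assoc]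
    _ = _ := by
        rw [lintegral_mul_const _ (by fun_prop), lintegral_Ioi_mul_exp_neg_mul_mul_pow hε,
          setLIntegral_congr (interior_ae_eq_of_null_frontier (hK.addHaar_frontier μ))]

theorem integral_norm_pow_mul_exp_neg_mul_gauge {K : Set E} (hK : Convex ℝ K) (h0 : K ∈ 𝓝 0)
    {ε : ℝ} (hε : 0 < ε) (n : ℕ) :
    ∫ z, ‖z‖ ^ n * exp (-ε * gauge K z) ∂μ =
      (finrank ℝ E + n)! / ε ^ (finrank ℝ E + n) * ∫ x in K, ‖x‖ ^ n ∂μ := by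
  have := continuous_gauge hK h0
  rw [integral_eq_lintegral_of_nonneg_ae (ae_of_all _ fun z => by positivity) (by fun_prop),
    integral_eq_lintegral_of_nonneg_ae (ae_of_all _ fun z => by positivity) (by fun_prop)]
  simp_rw [ENNReal.ofReal_mul (pow_nonneg (norm_nonneg _) n)]
  rw [lintegral_norm_pow_mul_exp_neg_mul_gauge μ hK h0 hε, ENNReal.toReal_mul,
    ENNReal.toReal_ofReal (by positivity)]

end NormedSpace

theorem knorm_mechanism_expected_squared_error_general (K : Set (EuclideanSpace ℝ (Fin 2)))
    (hKconv : Convex ℝ K) (h0 : (0 : EuclideanSpace ℝ (Fin 2)) ∈ interior K)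
    (ε : ℝ) (hε : 0 < ε) :
    (∫ z : EuclideanSpace ℝ (Fin 2),
        ‖z‖ ^ 2 * (ε ^ 2 / (2 * (volume K).toReal) * exp (-ε * gauge K z))) =
      12 / (ε ^ 2 * (volume K).toReal) * ∫ x in K, ‖x‖ ^ 2 := by
  have h := integral_norm_pow_mul_exp_neg_mul_gauge volume hKconv
    (mem_interior_iff_mem_nhds.1 h0) hε 2
  rw [finrank_euclideanSpace_fin] at h
  calc _ = ε ^ 2 / (2 * (volume K).toReal) * ∫ z, ‖z‖ ^ 2 * exp (-ε * gauge K z) := by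
        rw [← integral_const_mul]; congr with z; ring
    _ = _ := by
        rw [h, ← mul_assoc]
        congr 1
        norm_num [Nat.factorial]
        field_simp
        ring

/-- Expected squared error of the two-dimensional K-norm mechanism: for the density
`p(z) = (ε²/(2 vol K)) exp (-ε ‖z‖_K)`, the expected squared Euclidean norm equals
`12/ε²` times the mean squared Euclidean norm of a uniform point in `K`. -/
theorem knorm_mechanism_expected_squared_error (K : Set (EuclideanSpace ℝ (Fin 2)))
    (hKcomp : IsCompact K) (hKconv : Convex ℝ K) (h0 : (0 : EuclideanSpace ℝ (Fin 2)) ∈ interior K)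
    (hKpos : 0 < (volume K).toReal) (ε : ℝ) (hε : 0 < ε) :
    (∫ z : EuclideanSpace ℝ (Fin 2),
        ‖z‖ ^ 2 * (ε ^ 2 / (2 * (volume K).toReal) * exp (-ε * gauge K z))) =
      12 / (ε ^ 2 * (volume K).toReal) * ∫ x in K, ‖x‖ ^ 2 :=
  knorm_mechanism_expected_squared_error_general K hKconv h0 ε hε
end
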